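/- arXiv:1902.05039 — 2 statements merged into one kernel-verified Lean document; each statement's English description precedes it below -/
import Mathlib

section
/- Under the hypotheses of the preceding statement (σ a nonzero σ-finite measure on (0,∞) with ∫ min(1,τ)dσ(τ) < ∞ and σ((0,∞)) = ∞, k(t) = σ((t,∞)), Φ(λ) = ∫ (1 − e^{−λτ})dσ(τ), K(λ) = ∫_0^∞ e^{−λt}k(t)dt, η_τ probability measures with ∫ e^{−λs}dη_τ(s) = e^{−τΦ(λ)}, G_t(τ) = ∫_{[0,t]} k(t−s)dη_τ(s), and (t,τ) ↦ G_t(τ) jointly measurable), for every λ > 0 one has ∫_0^∞ e^{−λt} ( ∫_0^∞ G_t(τ) dτ ) dt = 1/λ; i.e., the double integral identity expressing that G_t(·) is a probability density in τ for almost every t. -/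
/-!
By Tonelli, the left side is `∫_0^∞ (∫_0^∞ e^{-λt} G_t(τ) dt) dτ`. For fixed `τ` the inner
integral is the Laplace transform of the convolution `k ⋆ η_τ`, so it factors as
`K(λ) e^{-τΦ(λ)}`; integrating in `τ` gives `K(λ) / Φ(λ)`. A second application of Tonelli,
`∫_0^∞ e^{-λt} σ((t,∞)) dt = ∫ (1 - e^{-λτ}) / λ dσ(τ)`, shows `λ K(λ) = Φ(λ)`, and the
hypotheses on `σ` give `0 < Φ(λ) < ∞`.
-/

open MeasureTheory Set Real
open scoped ENNReal

theorem lintegral_Ioi_exp_neg_mul {c : ℝ} (hc : 0 < c) :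
    ∫⁻ x in Ioi 0, ENNReal.ofReal (exp (-c * x)) = ENNReal.ofReal (1 / c) := by
  rw [← ofReal_integral_eq_lintegral_ofReal (integrableOn_exp_mul_Ioi (by linarith) 0)
    (ae_of_all _ fun x => (exp_pos _).le), integral_exp_mul_Ioi (by linarith)]
  simp

theorem lintegral_Ioo_exp_neg_mul {c τ : ℝ} (hc : 0 < c) (hτ : 0 ≤ τ) :
    ∫⁻ x in Ioo 0 τ, ENNReal.ofReal (exp (-c * x))
      = ENNReal.ofReal ((1 - exp (-c * τ)) / c) := by
  have h_antideriv (x : ℝ) : HasDerivAt (fun x => -exp (-c * x) / c) (exp (-c * x)) x := by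
    refine ((((hasDerivAt_id x).const_mul (-c)).exp.neg).div_const c).congr_deriv ?_
    field_simp
    simp
  rw [← ofReal_integral_eq_lintegral_ofReal
      ((integrableOn_exp_mul_Ioi (by linarith) 0).mono_set Ioo_subset_Ioi_self)
      (ae_of_all _ fun x => (exp_pos _).le),
    ← integral_Ioc_eq_integral_Ioo, ← intervalIntegral.integral_of_le hτ,
    intervalIntegral.integral_eq_sub_of_hasDerivAt (fun x _ => h_antideriv x)
      ((by fun_prop : Continuous fun x => exp (-c * x)).intervalIntegrable _ _)]
  congr 1
  simp
  ring

theorem one_sub_exp_neg_mul_le (lam : ℝ) {τ : ℝ} (hτ : 0 ≤ τ) :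
    1 - exp (-lam * τ) ≤ max 1 lam * min 1 τ := by
  have h_lin : 1 - exp (-lam * τ) ≤ lam * τ := by linarith [add_one_le_exp (-lam * τ)]
  have h_one : 1 - exp (-lam * τ) ≤ 1 := by linarith [exp_pos (-lam * τ)]
  rcases le_total τ 1 with h | h
  · rw [min_eq_right h]; nlinarith [le_max_right 1 lam]
  · rw [min_eq_left h, mul_one]; linarith [le_max_left 1 lam]

noncomputable def laplaceExponent (σ : Measure ℝ) (lam : ℝ) : ℝ≥0∞ :=
  ∫⁻ τ in Ioi 0, ENNReal.ofReal (1 - exp (-lam * τ)) ∂σ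

theorem laplaceExponent_ne_top {σ : Measure ℝ}
    (hσ : ∫⁻ τ in Ioi 0, ENNReal.ofReal (min 1 τ) ∂σ < ⊤) (lam : ℝ) :
    laplaceExponent σ lam ≠ ⊤ := by
  refine ne_top_of_le_ne_top
    (ENNReal.mul_ne_top (ENNReal.ofReal_ne_top (r := max 1 lam)) hσ.ne) ?_
  rw [laplaceExponent, ← lintegral_const_mul' _ _ ENNReal.ofReal_ne_top]
  refine setLIntegral_mono' measurableSet_Ioi fun τ hτ => ?_
  rw [← ENNReal.ofReal_mul (by positivity)]
  exact ENNReal.ofReal_le_ofReal (one_sub_exp_neg_mul_le lam (le_of_lt hτ))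

theorem laplaceExponent_ne_zero {σ : Measure ℝ} (hσ : σ (Ioi 0) ≠ 0) {lam : ℝ} (hlam : 0 < lam) :
    laplaceExponent σ lam ≠ 0 := by
  refine ((setLIntegral_pos_iff (by fun_prop)).2 ?_).ne'
  rw [inter_eq_right.2 (show Ioi (0 : ℝ) ⊆ Function.support _ from fun τ (hτ : 0 < τ) => ?_)]
  · exact pos_iff_ne_zero.2 hσ
  · simpa [Function.mem_support] using mul_pos hlam hτ

theorem setLIntegral_Ioi_mul_measure_Ioi (σ : Measure ℝ) [SFinite σ] {f : ℝ → ℝ≥0∞}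
    (hf : Measurable f) :
    ∫⁻ t in Ioi 0, f t * σ (Ioi t) = ∫⁻ τ in Ioi 0, (∫⁻ t in Ioo 0 τ, f t) ∂σ := by
  let F : ℝ → ℝ → ℝ≥0∞ := fun t τ => (Ioi t).indicator (fun _ => f t) τ
  have hF : Measurable (Function.uncurry F) :=
    (hf.comp measurable_fst).indicator (measurableSet_lt measurable_fst measurable_snd)
  calc ∫⁻ t in Ioi 0, f t * σ (Ioi t)
      = ∫⁻ t in Ioi 0, ∫⁻ τ in Ioi 0, F t τ ∂σ := by
        refine setLIntegral_congr_fun measurableSet_Ioi fun t ht => ?_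
        rw [lintegral_indicator_const measurableSet_Ioi, Measure.restrict_apply measurableSet_Ioi,
          inter_eq_left.2 (Ioi_subset_Ioi (le_of_lt ht)), mul_comm]
    _ = ∫⁻ τ in Ioi 0, ∫⁻ t in Ioi (0 : ℝ), F t τ ∂volume ∂σ :=
        lintegral_lintegral_swap hF.aemeasurable
    _ = ∫⁻ τ in Ioi 0, (∫⁻ t in Ioo 0 τ, f t) ∂σ := by
        refine setLIntegral_congr_fun measurableSet_Ioi fun τ hτ => ?_
        rw [← lintegral_indicator measurableSet_Ioi, ← lintegral_indicator measurableSet_Ioo]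
        congr 1 with t
        by_cases ht : t < τ <;> by_cases h0 : 0 < t <;> simp [F, indicator, ht, h0]

theorem setLIntegral_exp_mul_measure_Ioi (σ : Measure ℝ) [SFinite σ] {lam : ℝ} (hlam : 0 < lam) :
    ∫⁻ t in Ioi 0, ENNReal.ofReal (exp (-lam * t)) * σ (Ioi t)
      = laplaceExponent σ lam / ENNReal.ofReal lam := by
  rw [setLIntegral_Ioi_mul_measure_Ioi σ (by fun_prop), laplaceExponent, div_eq_mul_inv,
    ← lintegral_mul_const' _ _ (ENNReal.inv_ne_top.2 (by simpa using hlam))]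
  refine setLIntegral_congr_fun measurableSet_Ioi fun τ hτ => ?_
  rw [lintegral_Ioo_exp_neg_mul hlam (le_of_lt hτ), ENNReal.ofReal_div_of_pos hlam,
    div_eq_mul_inv]

theorem setLIntegral_Ioi_comp_add_right (g : ℝ → ℝ≥0∞) (a s : ℝ) :
    ∫⁻ u in Ioi a, g (u + s) = ∫⁻ t in Ioi (a + s), g t := by
  rw [← lintegral_indicator measurableSet_Ioi, ← lintegral_indicator measurableSet_Ioi,
    ← lintegral_add_right_eq_self ((Ioi (a + s)).indicator g) s]
  congr 1 with u
  simp [indicator]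

theorem setLIntegral_exp_mul_convolution {k : ℝ → ℝ≥0∞} (hk : Measurable k) (η : Measure ℝ)
    [SFinite η] (hη : η (Iio 0) = 0) (lam : ℝ) :
    ∫⁻ t in Ioi 0, ENNReal.ofReal (exp (-lam * t)) * ∫⁻ s in Icc 0 t, k (t - s) ∂η
      = (∫⁻ u in Ioi 0, ENNReal.ofReal (exp (-lam * u)) * k u)
        * ∫⁻ s in Ici 0, ENNReal.ofReal (exp (-lam * s)) ∂η := by
  set e : ℝ → ℝ≥0∞ := fun t => ENNReal.ofReal (exp (-lam * t))
  have he : Measurable e := by fun_prop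
  have he_add (u s : ℝ) : e (u + s) = e s * e u := by
    simp only [e]
    rw [mul_add, exp_add, ENNReal.ofReal_mul (exp_pos _).le, mul_comm]
  let F : ℝ → ℝ → ℝ≥0∞ := fun t s => (Icc 0 t).indicator (fun s => e t * k (t - s)) s
  have hF : Measurable (Function.uncurry F) := by
    change Measurable fun p : ℝ × ℝ => {p : ℝ × ℝ | 0 ≤ p.2 ∧ p.2 ≤ p.1}.indicator
      (fun p => e p.1 * k (p.1 - p.2)) p
    exact ((he.comp measurable_fst).mul (hk.comp (measurable_fst.sub measurable_snd))).indicator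
      ((measurableSet_le measurable_const measurable_snd).inter
        (measurableSet_le measurable_snd measurable_fst))
  have h_inner : ∀ s ∈ Ici (0 : ℝ),
      ∫⁻ t in Ioi 0, F t s = (∫⁻ u in Ioi 0, e u * k u) * e s := by
    intro s hs
    calc ∫⁻ t in Ioi 0, F t s
        = ∫⁻ t in Ici 0, F t s := setLIntegral_congr Ioi_ae_eq_Ici
      _ = ∫⁻ t in Ici s, e t * k (t - s) := by
        rw [← lintegral_indicator measurableSet_Ici, ← lintegral_indicator measurableSet_Ici]
        congr 1 with t
        by_cases hst : s ≤ t
        · simp [F, indicator, hst, mem_Ici.1 hs, (mem_Ici.1 hs).trans hst]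
        · simp [F, indicator, hst]
      _ = ∫⁻ u in Ioi 0, e (u + s) * k u := by
        rw [← setLIntegral_congr Ioi_ae_eq_Ici]
        simpa using (setLIntegral_Ioi_comp_add_right (fun t => e t * k (t - s)) 0 s).symm
      _ = (∫⁻ u in Ioi 0, e u * k u) * e s := by
        simp_rw [he_add, mul_assoc]
        rw [lintegral_const_mul (f := fun u => e u * k u) _ (he.mul hk), mul_comm]
  have hη_restrict : η.restrict (Ici 0) = η :=
    Measure.restrict_eq_self_of_ae_mem (by simpa [ae_iff, ← Iio_def] using hη)
  calc ∫⁻ t in Ioi 0, e t * ∫⁻ s in Icc 0 t, k (t - s) ∂η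
      = ∫⁻ t in Ioi 0, ∫⁻ s, F t s ∂η := by
        congr 1 with t
        rw [← lintegral_const_mul' _ _ ENNReal.ofReal_ne_top,
          ← lintegral_indicator measurableSet_Icc]
    _ = ∫⁻ s, ∫⁻ t in Ioi (0 : ℝ), F t s ∂volume ∂η := lintegral_lintegral_swap hF.aemeasurable
    _ = ∫⁻ s in Ici 0, ∫⁻ t in Ioi (0 : ℝ), F t s ∂volume ∂η := by rw [hη_restrict]
    _ = ∫⁻ s in Ici 0, (∫⁻ u in Ioi 0, e u * k u) * e s ∂η :=
        setLIntegral_congr_fun measurableSet_Ici h_inner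
    _ = _ := lintegral_const_mul _ he

theorem inverse_subordinator_density_integrates_to_one_general
    (σ : Measure ℝ) [SigmaFinite σ]
    (hσ_int : ∫⁻ τ in Set.Ioi (0 : ℝ), ENNReal.ofReal (min 1 τ) ∂σ < ⊤)
    (hσ_inf : σ (Set.Ioi 0) = ⊤)
    (Φ : ℝ → ℝ)
    (hΦ : ∀ lam : ℝ, 0 < lam →
      Φ lam = (∫⁻ τ in Set.Ioi (0 : ℝ), ENNReal.ofReal (1 - Real.exp (-lam * τ)) ∂σ).toReal)
    (η : ℝ → Measure ℝ)
    (hη_prob : ∀ τ : ℝ, 0 ≤ τ → IsProbabilityMeasure (η τ))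
    (hη_supp : ∀ τ : ℝ, 0 ≤ τ → η τ (Set.Iio 0) = 0)
    (hη_laplace : ∀ τ : ℝ, 0 ≤ τ → ∀ lam : ℝ, 0 < lam →
      ∫⁻ s in Set.Ici (0 : ℝ), ENNReal.ofReal (Real.exp (-lam * s)) ∂(η τ)
        = ENNReal.ofReal (Real.exp (-τ * Φ lam)))
    (G : ℝ → ℝ → ℝ≥0∞)
    (hG_def : ∀ t τ : ℝ, G t τ = ∫⁻ s in Set.Icc (0 : ℝ) t, σ (Set.Ioi (t - s)) ∂(η τ))
    (hG_meas : Measurable (Function.uncurry G))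
    (lam : ℝ) (hlam : 0 < lam) :
    (∫⁻ t in Set.Ioi (0 : ℝ), ENNReal.ofReal (Real.exp (-lam * t)) *
        ∫⁻ τ in Set.Ioi (0 : ℝ), G t τ)
      = ENNReal.ofReal (1 / lam) := by
  have hΦ_toReal : Φ lam = (laplaceExponent σ lam).toReal := hΦ lam hlam
  have hΦ_pos : 0 < Φ lam := hΦ_toReal ▸ ENNReal.toReal_pos
    (laplaceExponent_ne_zero (by simp [hσ_inf]) hlam) (laplaceExponent_ne_top hσ_int lam)
  have hK : ∫⁻ t in Ioi 0, ENNReal.ofReal (exp (-lam * t)) * σ (Ioi t)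
      = ENNReal.ofReal (Φ lam / lam) := by
    rw [setLIntegral_exp_mul_measure_Ioi σ hlam, hΦ_toReal, ENNReal.ofReal_div_of_pos hlam,
      ENNReal.ofReal_toReal (laplaceExponent_ne_top hσ_int lam)]
  have h_inner : ∀ τ ∈ Ioi (0 : ℝ), ∫⁻ t in Ioi 0, ENNReal.ofReal (exp (-lam * t)) * G t τ
      = ENNReal.ofReal (Φ lam / lam) * ENNReal.ofReal (exp (-Φ lam * τ)) := by
    intro τ (hτ : 0 < τ)
    have := hη_prob τ hτ.le
    simp_rw [hG_def]
    rw [setLIntegral_exp_mul_convolution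
        (Antitone.measurable fun a b hab => measure_mono (Ioi_subset_Ioi hab)) (η τ)
        (hη_supp τ hτ.le), hK, hη_laplace τ hτ.le lam hlam, neg_mul_comm, mul_comm τ]
  calc ∫⁻ t in Ioi 0, ENNReal.ofReal (exp (-lam * t)) * ∫⁻ τ in Ioi 0, G t τ
      = ∫⁻ τ in Ioi 0, ∫⁻ t in Ioi 0, ENNReal.ofReal (exp (-lam * t)) * G t τ := by
        simp_rw [← lintegral_const_mul' _ _ ENNReal.ofReal_ne_top]
        exact lintegral_lintegral_swap ((by fun_prop : Measurable fun p : ℝ × ℝ =>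
          ENNReal.ofReal (exp (-lam * p.1))).mul hG_meas).aemeasurable
    _ = ∫⁻ τ in Ioi 0, ENNReal.ofReal (Φ lam / lam) * ENNReal.ofReal (exp (-Φ lam * τ)) :=
        setLIntegral_congr_fun measurableSet_Ioi h_inner
    _ = ENNReal.ofReal (1 / lam) := by
        rw [lintegral_const_mul _ (by fun_prop), lintegral_Ioi_exp_neg_mul hΦ_pos,
          ← ENNReal.ofReal_mul (div_nonneg hΦ_pos.le hlam.le)]
        field_simp

/-- Under the hypotheses of Statement 2, together with
`σ((0,∞)) = ∞` and joint measurability of `(t,τ) ↦ G t τ`, for every `λ > 0`,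
`∫_0^∞ e^{-λ t} (∫_0^∞ G t τ dτ) dt = 1/λ`,
i.e. `G t ·` is a probability density in `τ` for a.e. `t`. -/
theorem inverse_subordinator_density_integrates_to_one
    (σ : Measure ℝ) [SigmaFinite σ] (hσ_ne : σ ≠ 0)
    (hσ_supp : σ (Set.Iic 0) = 0)
    (hσ_int : ∫⁻ τ in Set.Ioi (0 : ℝ), ENNReal.ofReal (min 1 τ) ∂σ < ⊤)
    (hσ_inf : σ (Set.Ioi 0) = ⊤)
    (Φ K : ℝ → ℝ)
    (hΦ : ∀ lam : ℝ, 0 < lam →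
      Φ lam = (∫⁻ τ in Set.Ioi (0 : ℝ), ENNReal.ofReal (1 - Real.exp (-lam * τ)) ∂σ).toReal)
    (hK : ∀ lam : ℝ, 0 < lam →
      K lam = (∫⁻ t in Set.Ioi (0 : ℝ),
        ENNReal.ofReal (Real.exp (-lam * t)) * σ (Set.Ioi t)).toReal)
    (η : ℝ → Measure ℝ)
    (hη_prob : ∀ τ : ℝ, 0 ≤ τ → IsProbabilityMeasure (η τ))
    (hη_supp : ∀ τ : ℝ, 0 ≤ τ → η τ (Set.Iio 0) = 0)
    (hη_laplace : ∀ τ : ℝ, 0 ≤ τ → ∀ lam : ℝ, 0 < lam →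
      ∫⁻ s in Set.Ici (0 : ℝ), ENNReal.ofReal (Real.exp (-lam * s)) ∂(η τ)
        = ENNReal.ofReal (Real.exp (-τ * Φ lam)))
    (G : ℝ → ℝ → ℝ≥0∞)
    (hG_def : ∀ t τ : ℝ, G t τ = ∫⁻ s in Set.Icc (0 : ℝ) t, σ (Set.Ioi (t - s)) ∂(η τ))
    (hG_meas : Measurable (Function.uncurry G))
    (lam : ℝ) (hlam : 0 < lam) :
    (∫⁻ t in Set.Ioi (0 : ℝ), ENNReal.ofReal (Real.exp (-lam * t)) *
        ∫⁻ τ in Set.Ioi (0 : ℝ), G t τ)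
      = ENNReal.ofReal (1 / lam) :=
  inverse_subordinator_density_integrates_to_one_general σ hσ_int hσ_inf Φ hΦ η hη_prob hη_supp
    hη_laplace G hG_def hG_meas lam hlam
end

section
/- For all a > 0 and b > 0, ∫_0^∞ τ^{−1/2} e^{−a/τ − bτ} dτ = √π · e^{−2√(ab)} / √b. -/
open MeasureTheory Set Filter

/-! Substituting `τ = x²` turns the integral into `2 ∫₀^∞ exp (-a/x² - b x²) dx`, and completing
the square gives `-a/x² - b x² = -2√(ab) - (√b x - √a/x)²`. For an even integrable `f`, the
Cauchy–Schlömilch substitution `u = β s - α/s` gives `∫₀^∞ (β + α/s²) f (β s - α/s) ds = ∫_ℝ f`,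
and the reflection `s ↦ α/(β s)` shows that the two parts of the weight `β + α/s²` contribute
equally, so `∫₀^∞ f (β s - α/s) ds = (2β)⁻¹ ∫_ℝ f`. For `f u = exp (-u²)` this is `√π / (2√b)`. -/

section CauchySchlomilch

variable {E : Type*} [NormedAddCommGroup E] [NormedSpace ℝ E] {α β : ℝ}

lemma integral_Ioi_rpow_neg_half_smul (g : ℝ → E) :
    ∫ τ in Ioi 0, τ ^ (-(1 : ℝ) / 2) • g τ = (2 : ℝ) • ∫ x in Ioi 0, g (x ^ 2) := by
  rw [← integral_comp_rpow_Ioi _ two_ne_zero, ← integral_smul]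
  refine setIntegral_congr_fun measurableSet_Ioi fun x hx => ?_
  have hx : 0 < x := hx
  rw [← Real.rpow_mul hx.le, Real.rpow_two, smul_smul]
  norm_num [Real.rpow_neg_one, hx.ne']

lemma integral_Ioi_div_sq_smul_comp_div {c : ℝ} (hc : 0 < c) (g : ℝ → E) :
    ∫ t in Ioi 0, (c / t ^ 2) • g (c / t) = ∫ t in Ioi 0, g t := by
  have hderiv : ∀ t ∈ Ioi (0 : ℝ), HasDerivWithinAt (fun t => c / t) (-c / t ^ 2) (Ioi 0) t :=
    fun t ht => by
      simpa [div_eq_mul_inv] using ((hasDerivAt_inv (ne_of_gt ht)).const_mul c).hasDerivWithinAt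
  have hinv : Function.Involutive fun t : ℝ => c / t := fun t => div_div_cancel₀ hc.ne'
  have himage : (fun t => c / t) '' Ioi 0 = Ioi 0 := by
    rw [hinv.image_eq_preimage_symm]
    ext t
    simp [div_pos_iff_of_pos_left hc]
  have h := integral_image_eq_integral_abs_deriv_smul measurableSet_Ioi hderiv
    hinv.injective.injOn g
  rw [himage] at h
  rw [h]
  refine setIntegral_congr_fun measurableSet_Ioi fun t _ => ?_
  rw [neg_div, abs_neg, abs_of_nonneg (by positivity)]

lemma neg_div_sq_sub_mul_sq {a b x : ℝ} (ha : 0 ≤ a) (hb : 0 ≤ b) (hx : x ≠ 0) :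
    -a / x ^ 2 - b * x ^ 2 = -2 * √(a * b) - (√b * x - √a / x) ^ 2 := by
  rw [Real.sqrt_mul ha]
  field_simp
  linear_combination Real.sq_sqrt ha + x ^ 4 * Real.sq_sqrt hb

lemma hasDerivAt_mul_sub_div {s : ℝ} (hs : s ≠ 0) :
    HasDerivAt (fun s => β * s - α / s) (β + α / s ^ 2) s := by
  have h := ((hasDerivAt_id' s).const_mul β).fun_sub ((hasDerivAt_inv hs).const_mul α)
  rw [show β * 1 - α * -(s ^ 2)⁻¹ = β + α / s ^ 2 by ring] at h
  simpa only [div_eq_mul_inv] using h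

lemma strictMonoOn_mul_sub_div (hα : 0 ≤ α) (hβ : 0 < β) :
    StrictMonoOn (fun s => β * s - α / s) (Ioi 0) := by
  intro x hx y _ hxy
  have : α / y ≤ α / x := div_le_div_of_nonneg_left hα hx hxy.le
  have : β * x < β * y := mul_lt_mul_of_pos_left hxy hβ
  dsimp only
  linarith

lemma image_mul_sub_div_Ioi (hα : 0 < α) (hβ : 0 < β) :
    (fun s => β * s - α / s) '' Ioi 0 = univ := by
  refine eq_univ_of_forall fun y => ?_
  set r := Real.sqrt (y ^ 2 + 4 * α * β)
  have hr : r ^ 2 = y ^ 2 + 4 * α * β := Real.sq_sqrt (by positivity)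
  have hyr : 0 < y + r := by nlinarith [Real.sqrt_nonneg (y ^ 2 + 4 * α * β), mul_pos hα hβ]
  -- `s` is the positive root of `β s² - y s - α = 0`
  set s := (y + r) / (2 * β)
  have hs : 0 < s := by positivity
  have hquad : β * s * s = y * s + α := by
    simp only [s]; field_simp; linear_combination hr
  refine ⟨s, hs, ?_⟩
  dsimp only
  field_simp
  linarith

lemma integrableOn_Ioi_deriv_smul_comp_mul_sub_div (hα : 0 < α) (hβ : 0 < β) {f : ℝ → E}
    (hf : Integrable f) :
    IntegrableOn (fun s => (β + α / s ^ 2) • f (β * s - α / s)) (Ioi 0) := by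
  have h := (integrableOn_image_iff_integrableOn_abs_deriv_smul measurableSet_Ioi
    (fun s hs => (hasDerivAt_mul_sub_div (ne_of_gt hs)).hasDerivWithinAt)
    (strictMonoOn_mul_sub_div hα.le hβ).injOn f).1
    (by rwa [image_mul_sub_div_Ioi hα hβ, integrableOn_univ])
  refine h.congr_fun (fun s _ => ?_) measurableSet_Ioi
  dsimp only
  rw [abs_of_pos (by positivity)]

lemma integral_Ioi_deriv_smul_comp_mul_sub_div (hα : 0 < α) (hβ : 0 < β) (f : ℝ → E) :
    ∫ s in Ioi 0, (β + α / s ^ 2) • f (β * s - α / s) = ∫ u, f u := by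
  have h := integral_image_eq_integral_abs_deriv_smul measurableSet_Ioi
    (fun s hs => (hasDerivAt_mul_sub_div (ne_of_gt hs)).hasDerivWithinAt)
    (strictMonoOn_mul_sub_div hα.le hβ).injOn f
  rw [image_mul_sub_div_Ioi hα hβ, setIntegral_univ] at h
  rw [h]
  refine setIntegral_congr_fun measurableSet_Ioi fun s _ => ?_
  rw [abs_of_pos (by positivity)]

lemma integrableOn_Ioi_comp_mul_sub_div (hα : 0 < α) (hβ : 0 < β) {f : ℝ → E}
    (hf : Integrable f) :
    IntegrableOn (fun s => f (β * s - α / s)) (Ioi 0) := by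
  have hcont : ContinuousOn (fun s : ℝ => (β + α / s ^ 2)⁻¹) (Ioi 0) :=
    (continuousOn_const.add (continuousOn_const.div (continuousOn_pow 2)
      fun s hs => pow_ne_zero 2 (ne_of_gt hs))).inv₀
      fun s _ => (by positivity : 0 < β + α / s ^ 2).ne'
  have hbound : ∀ s ∈ Ioi (0 : ℝ), ‖(β + α / s ^ 2)⁻¹‖ ≤ β⁻¹ := fun s hs => by
    rw [norm_inv, Real.norm_of_nonneg (by positivity)]
    exact inv_anti₀ hβ (le_add_of_nonneg_right (by positivity))
  have h : IntegrableOn (fun s => (β + α / s ^ 2)⁻¹ • (β + α / s ^ 2) • f (β * s - α / s))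
      (Ioi 0) :=
    (integrableOn_Ioi_deriv_smul_comp_mul_sub_div hα hβ hf).bdd_smul β⁻¹
      (hcont.aestronglyMeasurable measurableSet_Ioi)
      ((ae_restrict_iff' measurableSet_Ioi).2 (Eventually.of_forall hbound))
  refine h.congr_fun (fun s _ => ?_) measurableSet_Ioi
  dsimp only
  rw [smul_smul, inv_mul_cancel₀ (by positivity), one_smul]

lemma integral_Ioi_div_sq_smul_comp_mul_sub_div (hα : 0 < α) (hβ : 0 < β) {f : ℝ → E}
    (hf : Function.Even f) :
    ∫ s in Ioi 0, (α / s ^ 2) • f (β * s - α / s) = β • ∫ s in Ioi 0, f (β * s - α / s) := by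
  -- `s ↦ (α / β) / s` maps `β s - α / s` to its negative
  rw [← integral_Ioi_div_sq_smul_comp_div (div_pos hα hβ), ← integral_smul]
  refine setIntegral_congr_fun measurableSet_Ioi fun s hs => ?_
  have hs : s ≠ 0 := ne_of_gt hs
  have : β * (α / β / s) - α / (α / β / s) = -(β * s - α / s) := by
    field_simp; ring
  rw [this, hf, smul_smul]
  congr 1
  field_simp

theorem integral_Ioi_comp_mul_sub_div [CompleteSpace E] (hα : 0 < α) (hβ : 0 < β) {f : ℝ → E}
    (hf : Integrable f) (heven : Function.Even f) :
    ∫ s in Ioi 0, f (β * s - α / s) = (2 * β)⁻¹ • ∫ u, f u := by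
  set I := ∫ s in Ioi 0, f (β * s - α / s)
  have hg : IntegrableOn (fun s => β • f (β * s - α / s)) (Ioi 0) :=
    (integrableOn_Ioi_comp_mul_sub_div hα hβ hf).smul β
  have hsplit : ∫ s in Ioi 0, (α / s ^ 2) • f (β * s - α / s) = (∫ u, f u) - β • I := by
    rw [← integral_Ioi_deriv_smul_comp_mul_sub_div hα hβ f, ← integral_smul,
      ← integral_sub (integrableOn_Ioi_deriv_smul_comp_mul_sub_div hα hβ hf) hg]
    simp only [add_smul, add_sub_cancel_left]
  have hreflect := integral_Ioi_div_sq_smul_comp_mul_sub_div hα hβ heven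
  rw [hsplit, sub_eq_iff_eq_add] at hreflect
  rw [eq_inv_smul_iff₀ (by positivity), two_mul, add_smul, hreflect]
end CauchySchlomilch

/-- For all `a, b > 0`,
`∫_0^∞ τ^{-1/2} e^{-a/τ - bτ} dτ = √π e^{-2√(ab)} / √b`. -/
theorem integral_rpow_neg_half_exp
    (a b : ℝ) (ha : 0 < a) (hb : 0 < b) :
    (∫ τ in Set.Ioi (0 : ℝ), τ ^ (-(1 : ℝ) / 2) * Real.exp (-a / τ - b * τ))
      = Real.sqrt Real.pi * Real.exp (-2 * Real.sqrt (a * b)) / Real.sqrt b := by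
  have hgauss : ∫ u, Real.exp (-u ^ 2) = √Real.pi := by simpa using integral_gaussian 1
  have hintegrable : Integrable fun u : ℝ => Real.exp (-u ^ 2) := by
    simpa using integrable_exp_neg_mul_sq one_pos
  calc (∫ τ in Ioi 0, τ ^ (-(1 : ℝ) / 2) * Real.exp (-a / τ - b * τ))
      = 2 * ∫ x in Ioi 0, Real.exp (-a / x ^ 2 - b * x ^ 2) :=
        integral_Ioi_rpow_neg_half_smul fun τ => Real.exp (-a / τ - b * τ)
    _ = 2 * ∫ x in Ioi 0, Real.exp (-2 * √(a * b)) * Real.exp (-(√b * x - √a / x) ^ 2) := by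
        congr 1
        refine setIntegral_congr_fun measurableSet_Ioi fun x hx => ?_
        rw [neg_div_sq_sub_mul_sq ha.le hb.le (ne_of_gt hx), sub_eq_add_neg, Real.exp_add]
    _ = 2 * Real.exp (-2 * √(a * b)) * ((2 * √b)⁻¹ * √Real.pi) := by
        rw [integral_const_mul, integral_Ioi_comp_mul_sub_div (Real.sqrt_pos.2 ha)
          (Real.sqrt_pos.2 hb) hintegrable (fun u => by rw [neg_sq]), hgauss, smul_eq_mul]
        ring
    _ = √Real.pi * Real.exp (-2 * √(a * b)) / √b := by
        field_simp
end
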